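/- Finite model property: if a formula A ∈ For_MBCL is true at some world of some model built on a frame in F_demL, then A is true at some world of a model for MBCL whose set of worlds W is finite with cardinality at most 2^{|Sub(A)|}, where Sub(A) is the (finite) closure of {A} under subformulas, and each of whose relating relations R_w is a finite set of pairs of formulas. -/

import Mathlib

/-- Formulas of MBCL: variables, negation, box, diamond, conjunction,
disjunction, connexive implication. -/
inductive MForm : Type
  | var : ℕ → MForm
  | neg : MForm → MForm
  | box : MForm → MForm
  | dia : MForm → MForm
  | conj : MForm → MForm → MForm
  | disj : MForm → MForm → MForm
  | imp : MForm → MForm → MForm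
  deriving DecidableEq

/-- A model for MBCL: a nonempty set of worlds, an accessibility relation,
a family of relating relations indexed by worlds, and a valuation. -/
structure MModel where
  W : Type
  ne : Nonempty W
  Q : W → W → Prop
  R : W → MForm → MForm → Prop
  v : W → ℕ → Bool

/-- Truth of a formula at a world of an MBCL model. -/
def msat (M : MModel) : M.W → MForm → Prop
  | w, .var p => M.v w p = true
  | w, .neg B => ¬ msat M w B
  | w, .box B => ∀ u, M.Q w u → msat M u B
  | w, .dia B => ∃ u, M.Q w u ∧ msat M u B
  | w, .conj B C => msat M w B ∧ msat M w C
  | w, .disj B C => msat M w B ∨ msat M w C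
  | w, .imp B C => (¬ msat M w B ∨ msat M w C) ∧ M.R w B C

def mcondA1 (R : MForm → MForm → Prop) : Prop := ∀ A, ¬ R A (.neg A)
def mcondA2 (R : MForm → MForm → Prop) : Prop := ∀ A, ¬ R (.neg A) A
def mcondB0 (R : MForm → MForm → Prop) : Prop := ∀ A B, R A B → ¬ R A (.neg B)
def mcondB1 (R : MForm → MForm → Prop) : Prop :=
  ∀ A B, R (.imp A B) (.neg (.imp A (.neg B)))
def mcondB2 (R : MForm → MForm → Prop) : Prop :=
  ∀ A B, R (.imp A (.neg B)) (.neg (.imp A B))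
def mcondCUN (R : MForm → MForm → Prop) : Prop := ∀ A B, R A B → R (.neg A) (.neg B)

/-- ¬^j A : the formula A prefixed by j negations. -/
def mnegs : ℕ → MForm → MForm
  | 0, A => A
  | n + 1, A => .neg (mnegs n A)
/-- The demodalization function d : it erases all modal operators. -/
def demod : MForm → MForm
  | .var p => .var p
  | .neg A => .neg (demod A)
  | .box A => demod A
  | .dia A => demod A
  | .conj A B => .conj (demod A) (demod B)
  | .disj A B => .disj (demod A) (demod B)
  | .imp A B => .imp (demod A) (demod B)

/-- M is built on a frame in F_demL: at every world the relating relation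
satisfies (a1), (a2), (b0), (b1), (b2), and the family satisfies (dem-L). -/
def MFrameDemL (M : MModel) : Prop :=
  (∀ w : M.W,
    mcondA1 (M.R w) ∧ mcondA2 (M.R w) ∧ mcondB0 (M.R w) ∧ mcondB1 (M.R w) ∧
      mcondB2 (M.R w)) ∧
  ∀ (w : M.W) (A B : MForm), M.R w (demod A) (demod B) → M.R w A B

/-- Sub(A): the (finite) closure of {A} under subformulas. -/
def subf : MForm → Finset MForm
  | .var p => {.var p}
  | .neg A => insert (.neg A) (subf A)
  | .box A => insert (.box A) (subf A)
  | .dia A => insert (.dia A) (subf A)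
  | .conj A B => insert (.conj A B) (subf A ∪ subf B)
  | .disj A B => insert (.disj A B) (subf A ∪ subf B)
  | .imp A B => insert (.imp A B) (subf A ∪ subf B)

/-!
Filtration through `Sub(A)`: replace each world by the set of subformulas of `A` true at it, so
there are at most `2 ^ |Sub(A)|` worlds. One world sees another when some representatives do, and
at a world `f` the relating relation holds of `(B, C)` exactly when `B → C` is a subformula of `A`
lying in `f`. Since the truth of an implication includes the relating relation, this choice makes
the truth lemma go through for `→`, and it makes every relating relation a subset of
`Sub(A) × Sub(A)`.
-/
lemma mem_subf_self (A : MForm) : A ∈ subf A := by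
  cases A <;> simp [subf]

lemma subf_subset_of_mem {A B : MForm} (h : B ∈ subf A) : subf B ⊆ subf A := by
  induction A with
  | var p =>
    rw [Finset.mem_singleton.1 h]
  | neg A ih | box A ih | dia A ih =>
    rcases Finset.mem_insert.1 h with rfl | h
    · rfl
    · exact (ih h).trans (Finset.subset_insert _ _)
  | conj A C ihA ihC | disj A C ihA ihC | imp A C ihA ihC =>
    rcases Finset.mem_insert.1 h with rfl | h
    · rfl
    · refine Finset.Subset.trans ?_ (Finset.subset_insert _ _)
      rcases Finset.mem_union.1 h with h | h
      · exact (ihA h).trans Finset.subset_union_left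
      · exact (ihC h).trans Finset.subset_union_right

def SubfClosed (S : Finset MForm) : Prop := ∀ B ∈ S, subf B ⊆ S

lemma subfClosed_subf (A : MForm) : SubfClosed (subf A) :=
  fun _ => subf_subset_of_mem

namespace MModel

variable (M : MModel) (S : Finset MForm)

def profile (w : M.W) : Set S := {B | msat M w B}

open scoped Classical in
noncomputable def filtration : MModel where
  W := Set S
  ne := ⟨∅⟩
  Q f g := ∃ w u, M.Q w u ∧ f = M.profile S w ∧ g = M.profile S u
  R f B C := ∃ h : .imp B C ∈ S, ⟨_, h⟩ ∈ f
  v f p := decide (∃ h : .var p ∈ S, ⟨_, h⟩ ∈ f)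

variable {M S}

lemma msat_iff_of_profile_eq {w w' : M.W} (h : M.profile S w = M.profile S w') {B : MForm}
    (hB : B ∈ S) : msat M w B ↔ msat M w' B :=
  Set.ext_iff.1 h ⟨B, hB⟩

theorem msat_filtration_profile_iff (hS : SubfClosed S) {B : MForm} (hB : B ∈ S) (w : M.W) :
    msat (M.filtration S) (M.profile S w) B ↔ msat M w B := by
  induction B generalizing w with
  | var p => simp [msat, filtration, profile, hB]
  | neg B ih =>
    exact not_congr (ih (hS _ hB (by simp [subf, mem_subf_self])) w)
  | box B ih =>
    have ih := ih (hS _ hB (by simp [subf, mem_subf_self]))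
    constructor
    · exact fun hall u hQ => (ih u).1 (hall _ ⟨w, u, hQ, rfl, rfl⟩)
    · rintro hall _ ⟨w', u, hQ, hw, rfl⟩
      have hall' : msat M w' B.box := (msat_iff_of_profile_eq hw hB).1 hall
      exact (ih u).2 (hall' u hQ)
  | dia B ih =>
    have ih := ih (hS _ hB (by simp [subf, mem_subf_self]))
    constructor
    · rintro ⟨_, ⟨w', u, hQ, hw, rfl⟩, hu⟩
      exact (msat_iff_of_profile_eq hw hB).2 ⟨u, hQ, (ih u).1 hu⟩
    · rintro ⟨u, hQ, hu⟩
      exact ⟨_, ⟨w, u, hQ, rfl, rfl⟩, (ih u).2 hu⟩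
  | conj B C ihB ihC | disj B C ihB ihC =>
    simp only [msat]
    rw [ihB (hS _ hB (by simp [subf, mem_subf_self])) w,
      ihC (hS _ hB (by simp [subf, mem_subf_self])) w]
  | imp B C ihB ihC =>
    have hR : (M.filtration S).R (M.profile S w) B C ↔ msat M w (B.imp C) :=
      ⟨fun ⟨_, h⟩ => h, fun h => ⟨hB, h⟩⟩
    simp only [msat] at hR ⊢
    rw [ihB (hS _ hB (by simp [subf, mem_subf_self])) w,
      ihC (hS _ hB (by simp [subf, mem_subf_self])) w, hR]
    exact ⟨And.right, fun h => ⟨h.1, h⟩⟩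

instance finite_filtration_W : Finite (M.filtration S).W :=
  inferInstanceAs (Finite (Set S))

lemma card_filtration_W : Nat.card (M.filtration S).W = 2 ^ S.card := by
  classical
  change Nat.card (Set S) = _
  rw [Nat.card_eq_fintype_card, Fintype.card_set, Fintype.card_coe]

lemma finite_filtration_R (hS : SubfClosed S) (f : (M.filtration S).W) :
    {p : MForm × MForm | (M.filtration S).R f p.1 p.2}.Finite := by
  refine (S ×ˢ S).finite_toSet.subset ?_
  rintro ⟨B, C⟩ ⟨hBC, -⟩
  exact Finset.mem_product.2
    ⟨hS _ hBC (by simp [subf, mem_subf_self]), hS _ hBC (by simp [subf, mem_subf_self])⟩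

end MModel

theorem fmp_demL_general (A : MForm) (M : MModel) (w : M.W)
    (h : msat M w A) :
    ∃ (M' : MModel) (w' : M'.W),
      Finite M'.W ∧ Nat.card M'.W ≤ 2 ^ (subf A).card ∧
      (∀ u : M'.W, Set.Finite {p : MForm × MForm | M'.R u p.1 p.2}) ∧
      msat M' w' A :=
  ⟨M.filtration (subf A), M.profile (subf A) w, inferInstance,
    MModel.card_filtration_W.le, MModel.finite_filtration_R (subfClosed_subf A),
    (MModel.msat_filtration_profile_iff (subfClosed_subf A) (mem_subf_self A) w).2 h⟩

/-- Finite model property for F_demL : a formula satisfiable in a model built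
on a frame in F_demL is satisfiable in a model with at most 2^{|Sub(A)|}
worlds whose relating relations are finite sets of pairs of formulas. -/
theorem fmp_demL (A : MForm) (M : MModel) (hM : MFrameDemL M) (w : M.W)
    (h : msat M w A) :
    ∃ (M' : MModel) (w' : M'.W),
      Finite M'.W ∧ Nat.card M'.W ≤ 2 ^ (subf A).card ∧
      (∀ u : M'.W, Set.Finite {p : MForm × MForm | M'.R u p.1 p.2}) ∧
      msat M' w' A :=
  fmp_demL_general A M w h
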